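/- arXiv:2001.00925 — 4 statements merged into one kernel-verified Lean document; each statement's English description precedes it below -/
import Mathlib

section
/- Let W be a standard normal random variable and U be uniformly distributed on [-1,1], with W and U independent on a probability space (Ω,F,P). Define Z := U·1_{W ≥ 0} − U·1_{W < 0}. Then Z is independent of W, Z is uniformly distributed on [-1,1], but Z is not measurable with respect to the P-completion of σ(U). -/
open MeasureTheory ProbabilityTheory
open scoped ENNReal NNReal symmDiff

/-- The uniform probability measure on `[-1, 1] ⊆ ℝ`. -/
noncomputable def uniformNegOneOne : Measure ℝ :=
  (2 : ℝ≥0∞)⁻¹ • (volume.restrict (Set.Icc (-1 : ℝ) 1))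

lemma uniformNegOneOne_apply (A : Set ℝ) :
    uniformNegOneOne A = 2⁻¹ * volume (A ∩ Set.Icc (-1 : ℝ) 1) := by
  simp [uniformNegOneOne, Measure.restrict_apply' measurableSet_Icc]

lemma uniformNegOneOne_neg (A : Set ℝ) :
    uniformNegOneOne (Neg.neg ⁻¹' A) = uniformNegOneOne A := by
  rw [uniformNegOneOne_apply, uniformNegOneOne_apply]
  have h1 : (Neg.neg ⁻¹' A) ∩ Set.Icc (-1 : ℝ) 1
      = Neg.neg ⁻¹' (A ∩ Set.Icc (-1 : ℝ) 1) := by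
    ext x
    simp only [Set.mem_inter_iff, Set.mem_preimage, Set.mem_Icc]
    constructor
    · rintro ⟨h1, h2, h3⟩; exact ⟨h1, by linarith, by linarith⟩
    · rintro ⟨h1, h2, h3⟩; exact ⟨h1, by linarith, by linarith⟩
  rw [h1, Measure.measure_preimage_neg]

lemma uniformNegOneOne_singleton_zero : uniformNegOneOne ({0} : Set ℝ) = 0 := by
  rw [uniformNegOneOne_apply]
  have : volume (({0} : Set ℝ) ∩ Set.Icc (-1 : ℝ) 1) = 0 :=
    measure_mono_null Set.inter_subset_left Real.volume_singleton
  rw [this, mul_zero]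

lemma gaussianReal_Ici_zero : gaussianReal 0 1 (Set.Ici (0 : ℝ)) = 2⁻¹ := by
  have hmap : (gaussianReal 0 1).map (fun x => -x) = gaussianReal 0 1 := by
    have h := gaussianReal_map_const_mul (μ := (0 : ℝ)) (v := (1 : ℝ≥0)) (-1)
    have h2 : ((-1 : ℝ) * ·) = (fun x : ℝ => -x) := by funext x; ring
    have h3 : (⟨(-1 : ℝ) ^ 2, sq_nonneg _⟩ : ℝ≥0) * 1 = 1 := by ext; norm_num
    rw [h2, mul_zero] at h
    rw [h]; congr 1
  have hIic : gaussianReal 0 1 (Set.Iic (0 : ℝ)) = gaussianReal 0 1 (Set.Ici (0 : ℝ)) := by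
    conv_lhs => rw [← hmap]
    rw [Measure.map_apply measurable_neg measurableSet_Iic]
    congr 1
    ext x
    simp
  have h0 : gaussianReal 0 1 ({0} : Set ℝ) = 0 :=
    gaussianReal_absolutelyContinuous 0 one_ne_zero Real.volume_singleton
  have hsum : gaussianReal 0 1 (Set.Ici (0 : ℝ)) + gaussianReal 0 1 (Set.Iic (0 : ℝ)) = 1 := by
    have h := measure_union_add_inter (μ := gaussianReal 0 1) (t := Set.Iic (0 : ℝ))
      (Set.Ici (0 : ℝ)) measurableSet_Iic
    have huniv : Set.Ici (0 : ℝ) ∪ Set.Iic 0 = Set.univ := by ext x; simp [le_total]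
    rw [huniv, Set.Ici_inter_Iic, Set.Icc_self, h0, add_zero, measure_univ] at h
    exact h.symm
  rw [hIic] at hsum
  have h2 : gaussianReal 0 1 (Set.Ici (0 : ℝ)) * 2 = 1 := by
    rw [mul_two]; exact hsum
  exact ENNReal.eq_inv_of_mul_eq_one_left h2

/-- The σ-algebra of sets approximable (mod `P`-null sets) by sets of the form `U ⁻¹' B`. -/
def approxSigma {Ω : Type*} [MeasurableSpace Ω] (P : Measure Ω) (U : Ω → ℝ) :
    MeasurableSpace Ω where
  MeasurableSet' := fun S => ∃ B : Set ℝ, MeasurableSet B ∧ P (S ∆ (U ⁻¹' B)) = 0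
  measurableSet_empty := ⟨∅, MeasurableSet.empty, by simp⟩
  measurableSet_compl := by
    rintro S ⟨B, hB, h⟩
    exact ⟨Bᶜ, hB.compl, by rwa [Set.preimage_compl, compl_symmDiff_compl]⟩
  measurableSet_iUnion := by
    intro f hf
    choose B hBm hB0 using hf
    refine ⟨⋃ i, B i, MeasurableSet.iUnion hBm, ?_⟩
    have hsub : (⋃ i, f i) ∆ (U ⁻¹' ⋃ i, B i) ⊆ ⋃ i, (f i ∆ (U ⁻¹' B i)) := by
      intro x hx
      rw [Set.mem_symmDiff] at hx
      rcases hx with ⟨hx1, hx2⟩ | ⟨hx1, hx2⟩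
      · obtain ⟨i, hi⟩ := Set.mem_iUnion.mp hx1
        refine Set.mem_iUnion.mpr ⟨i, Set.mem_symmDiff.mpr (Or.inl ⟨hi, fun h => ?_⟩)⟩
        exact hx2 (Set.mem_iUnion.mpr ⟨i, h⟩)
      · rw [Set.mem_preimage, Set.mem_iUnion] at hx1
        obtain ⟨i, hi⟩ := hx1
        refine Set.mem_iUnion.mpr ⟨i, Set.mem_symmDiff.mpr (Or.inr ⟨hi, fun h => ?_⟩)⟩
        exact hx2 (Set.mem_iUnion.mpr ⟨i, h⟩)
    exact measure_mono_null hsub (measure_iUnion_null hB0)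

/-- **Counterexample (Remark 4.4)**: if `W` is standard normal, `U` uniform on `[-1,1]`,
`W` and `U` independent, and `Z := U·1_{W ≥ 0} − U·1_{W < 0}`, then `Z` is independent of `W`
and uniform on `[-1,1]`, but `Z` is not measurable with respect to the `P`-completion of
`σ(U)` (i.e. `σ(U)` augmented by all `P`-null sets). -/
theorem stmt0 {Ω : Type*} [MeasurableSpace Ω] (P : Measure Ω) [IsProbabilityMeasure P]
    (W U : Ω → ℝ) (hW : Measurable W) (hU : Measurable U)
    (hWlaw : P.map W = gaussianReal 0 1)
    (hUlaw : P.map U = uniformNegOneOne)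
    (hInd : IndepFun W U P)
    (Z : Ω → ℝ)
    (hZ : ∀ ω, Z ω = if 0 ≤ W ω then U ω else -U ω) :
    IndepFun Z W P ∧ P.map Z = uniformNegOneOne ∧
      ¬ Measurable[(MeasurableSpace.comap U inferInstance) ⊔
          MeasurableSpace.generateFrom {s : Set Ω | P s = 0}] Z := by
  have hZmeas : Measurable Z := by
    have hfun : Z = fun ω => if 0 ≤ W ω then U ω else -U ω := funext hZ
    rw [hfun]
    exact Measurable.ite (hW measurableSet_Ici) hU hU.neg
  have hPU : ∀ A : Set ℝ, MeasurableSet A → P (U ⁻¹' A) = uniformNegOneOne A := by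
    intro A hA
    rw [← hUlaw, Measure.map_apply hU hA]
  have hPW : ∀ B : Set ℝ, MeasurableSet B → P (W ⁻¹' B) = gaussianReal 0 1 B := by
    intro B hB
    rw [← hWlaw, Measure.map_apply hW hB]
  -- key computation
  have key : ∀ A B : Set ℝ, MeasurableSet A → MeasurableSet B →
      P (Z ⁻¹' A ∩ W ⁻¹' B) = uniformNegOneOne A * P (W ⁻¹' B) := by
    intro A B hA hB
    have hset : Z ⁻¹' A ∩ W ⁻¹' B =
        (U ⁻¹' A ∩ W ⁻¹' (B ∩ Set.Ici 0)) ∪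
          (U ⁻¹' (Neg.neg ⁻¹' A) ∩ W ⁻¹' (B ∩ Set.Iio 0)) := by
      ext ω
      simp only [Set.mem_inter_iff, Set.mem_preimage, Set.mem_union, Set.mem_Ici, Set.mem_Iio,
        hZ ω]
      by_cases h : 0 ≤ W ω
      · simp only [if_pos h, h, not_lt.mpr h]
        tauto
      · simp only [if_neg h, h, not_le.mp h]
        tauto
    have hdisj : Disjoint (U ⁻¹' A ∩ W ⁻¹' (B ∩ Set.Ici 0))
        (U ⁻¹' (Neg.neg ⁻¹' A) ∩ W ⁻¹' (B ∩ Set.Iio 0)) := by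
      refine Set.disjoint_left.mpr ?_
      rintro ω ⟨-, hω1⟩ ⟨-, hω2⟩
      exact absurd (Set.mem_Iio.mp hω2.2) (not_lt.mpr hω1.2)
    have hm2 : MeasurableSet (U ⁻¹' (Neg.neg ⁻¹' A) ∩ W ⁻¹' (B ∩ Set.Iio 0)) :=
      (hU (measurable_neg hA)).inter (hW (hB.inter measurableSet_Iio))
    rw [hset, measure_union hdisj hm2,
      hInd.symm.measure_inter_preimage_eq_mul A (B ∩ Set.Ici 0) hA (hB.inter measurableSet_Ici),
      hInd.symm.measure_inter_preimage_eq_mul (Neg.neg ⁻¹' A) (B ∩ Set.Iio 0)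
        (measurable_neg hA) (hB.inter measurableSet_Iio),
      hPU A hA, hPU _ (measurable_neg hA), uniformNegOneOne_neg, ← mul_add]
    congr 1
    have hdisj' : Disjoint (W ⁻¹' (B ∩ Set.Ici 0)) (W ⁻¹' (B ∩ Set.Iio 0)) := by
      refine Set.disjoint_left.mpr ?_
      rintro ω ⟨-, h1⟩ ⟨-, h2⟩
      exact absurd (Set.mem_Iio.mp h2) (not_lt.mpr h1)
    have hBsplit : W ⁻¹' (B ∩ Set.Ici 0) ∪ W ⁻¹' (B ∩ Set.Iio 0) = W ⁻¹' B := by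
      have huniv : Set.Ici (0 : ℝ) ∪ Set.Iio 0 = Set.univ := by ext x; simp [le_or_gt]
      rw [← Set.preimage_union, ← Set.inter_union_distrib_left, huniv, Set.inter_univ]
    rw [← hBsplit, measure_union hdisj' (hW (hB.inter measurableSet_Iio))]
  -- law of Z
  have hZlaw : P.map Z = uniformNegOneOne := by
    refine Measure.ext fun A hA => ?_
    rw [Measure.map_apply hZmeas hA]
    have h := key A Set.univ hA MeasurableSet.univ
    simpa using h
  have hPZ : ∀ A : Set ℝ, MeasurableSet A → P (Z ⁻¹' A) = uniformNegOneOne A := by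
    intro A hA
    rw [← hZlaw, Measure.map_apply hZmeas hA]
  refine ⟨?_, hZlaw, ?_⟩
  · rw [indepFun_iff_measure_inter_preimage_eq_mul]
    intro s t hs ht
    rw [key s t hs ht, hPZ s hs]
  · -- non-measurability
    intro hmeas
    have h𝒢le : (MeasurableSpace.comap U inferInstance) ⊔
        MeasurableSpace.generateFrom {s : Set Ω | P s = 0} ≤ approxSigma P U := by
      refine sup_le ?_ ?_
      · rintro S ⟨B, hB, rfl⟩
        exact ⟨B, hB, by simp⟩
      · refine MeasurableSpace.generateFrom_le ?_
        intro S hS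
        refine ⟨∅, MeasurableSet.empty, ?_⟩
        rw [Set.preimage_empty]
        have h : S ∆ (∅ : Set Ω) = S := by simp
        rw [h]
        exact hS
    have hU𝒢 : Measurable[(MeasurableSpace.comap U inferInstance) ⊔
        MeasurableSpace.generateFrom {s : Set Ω | P s = 0}] U :=
      measurable_iff_comap_le.mpr le_sup_left
    have hE𝒢 : MeasurableSet[(MeasurableSpace.comap U inferInstance) ⊔
        MeasurableSpace.generateFrom {s : Set Ω | P s = 0}] {ω | Z ω = U ω} :=
      measurableSet_eq_fun hmeas hU𝒢
    obtain ⟨B, hBm, hB0⟩ := h𝒢le _ hE𝒢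
    have hU0 : P (U ⁻¹' {0}) = 0 := by
      rw [hPU _ (measurableSet_singleton 0)]
      exact uniformNegOneOne_singleton_zero
    have hES : P ({ω | Z ω = U ω} ∆ (W ⁻¹' (Set.Ici (0 : ℝ)))) = 0 := by
      refine measure_mono_null ?_ hU0
      intro ω hω
      rw [Set.mem_symmDiff] at hω
      rcases hω with ⟨hE, hnS⟩ | ⟨hS, hnE⟩
      · have hlt : ¬ 0 ≤ W ω := hnS
        have h1 : Z ω = -U ω := by rw [hZ ω, if_neg hlt]
        have h2 : Z ω = U ω := hE
        have h3 : U ω = -U ω := h2.symm.trans h1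
        have h4 : U ω = 0 := by linarith
        simpa using h4
      · have hS' : (0 : ℝ) ≤ W ω := hS
        exact absurd (show Z ω = U ω by rw [hZ ω, if_pos hS']) hnE
    have hBS : P ((U ⁻¹' B) ∆ (W ⁻¹' (Set.Ici (0 : ℝ)))) = 0 := by
      have h := measure_symmDiff_le (μ := P) (U ⁻¹' B) {ω | Z ω = U ω}
        (W ⁻¹' (Set.Ici (0 : ℝ)))
      have h1 : P ((U ⁻¹' B) ∆ {ω | Z ω = U ω}) = 0 := by rwa [symmDiff_comm] at hB0
      rw [h1, hES, add_zero] at h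
      exact le_antisymm h zero_le
    have hdBS : P (U ⁻¹' B \ W ⁻¹' (Set.Ici (0 : ℝ))) = 0 :=
      measure_mono_null (fun x hx => Set.mem_symmDiff.mpr (Or.inl ⟨hx.1, hx.2⟩)) hBS
    have hdSB : P (W ⁻¹' (Set.Ici (0 : ℝ)) \ U ⁻¹' B) = 0 :=
      measure_mono_null (fun x hx => Set.mem_symmDiff.mpr (Or.inr ⟨hx.1, hx.2⟩)) hBS
    have hS₀m : MeasurableSet (W ⁻¹' (Set.Ici (0 : ℝ))) := hW measurableSet_Ici
    have hUBm : MeasurableSet (U ⁻¹' B) := hU hBm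
    have heq1 : P (U ⁻¹' B ∩ W ⁻¹' (Set.Ici (0 : ℝ))) = P (U ⁻¹' B) := by
      have h := measure_inter_add_diff (μ := P) (U ⁻¹' B) hS₀m
      rwa [hdBS, add_zero] at h
    have heq2 : P (W ⁻¹' (Set.Ici (0 : ℝ)) ∩ U ⁻¹' B) = P (W ⁻¹' (Set.Ici (0 : ℝ))) := by
      have h := measure_inter_add_diff (μ := P) (W ⁻¹' (Set.Ici (0 : ℝ))) hUBm
      rwa [hdSB, add_zero] at h
    have hPS₀ : P (W ⁻¹' (Set.Ici (0 : ℝ))) = 2⁻¹ := by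
      rw [hPW _ measurableSet_Ici, gaussianReal_Ici_zero]
    have hind : P (U ⁻¹' B ∩ W ⁻¹' (Set.Ici (0 : ℝ)))
        = P (U ⁻¹' B) * P (W ⁻¹' (Set.Ici (0 : ℝ))) :=
      hInd.symm.measure_inter_preimage_eq_mul B (Set.Ici 0) hBm measurableSet_Ici
    have hPB : P (U ⁻¹' B) = 2⁻¹ := by
      rw [← heq1, Set.inter_comm, heq2, hPS₀]
    rw [heq1, hPB, hPS₀] at hind
    have hc : (2 : ℝ≥0∞) * 2⁻¹ = 1 := ENNReal.mul_inv_cancel (by norm_num) (by norm_num)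
    have h1 := congrArg (2 * ·) hind
    simp only [← mul_assoc, hc, one_mul] at h1
    rw [eq_comm, ENNReal.inv_eq_one] at h1
    norm_num at h1
end

section
/- Let E be a Polish space and Υ₁, Υ₂ be Borel probability measures on P(E) (the space of Borel probability measures on E with the weak topology). Suppose that for every k ≥ 1 and all bounded continuous functions φ₁,…,φ_k : E → ℝ, ∫_{P(E)} ∏_{i=1}^k ⟨φ_i, ν⟩ Υ₁(dν) = ∫_{P(E)} ∏_{i=1}^k ⟨φ_i, ν⟩ Υ₂(dν). Then Υ₁ = Υ₂. -/
open MeasureTheory Topology Metric Set Filter TopologicalSpace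
open scoped ENNReal NNReal BoundedContinuousFunction

section Separability

variable {E : Type*} [MeasurableSpace E] [PseudoMetricSpace E] [OpensMeasurableSpace E]
  [SeparableSpace E]

private lemma exists_discrete_approx [Nonempty E]
    (νm : Measure E) [IsProbabilityMeasure νm] (r : ℝ) (r_pos : 0 < r)
    (D : Set E) (D_dense : Dense D) :
    ∃ (N : ℕ) (z : ℕ → E) (q : ℕ → ℚ), (∀ n, z n ∈ D) ∧ (∑ n ∈ Finset.range N, q n = 1)
      ∧ (∀ n, 0 ≤ q n)
      ∧ levyProkhorovEDist νm (∑ i : Fin N, ENNReal.ofReal ((q i : ℝ)) • Measure.dirac (z i))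
          ≤ ENNReal.ofReal (4 * (min (r/5) 4⁻¹)) := by
  classical
  set ε : ℝ := min (r/5) 4⁻¹ with hε
  have ε_pos : 0 < ε := lt_min (by positivity) (by norm_num)
  have ε_le : ε ≤ 4⁻¹ := min_le_right _ _
  obtain ⟨As, As_mble, As_bdd, As_diam, As_cover, As_disj⟩ :=
    SeparableSpace.exists_measurable_partition_diam_le E ε_pos
  have hzex : ∀ n : ℕ, ∃ zn : E, zn ∈ D ∧ ((As n).Nonempty → ∃ a ∈ As n, dist zn a < ε) := by
    intro n
    rcases Set.eq_empty_or_nonempty (As n) with h | h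
    · exact ⟨D_dense.nonempty.choose, D_dense.nonempty.choose_spec, by
        simp [h, Set.not_nonempty_empty]⟩
    · obtain ⟨a, ha⟩ := h
      obtain ⟨zn, hznD, hza⟩ := D_dense.exists_dist_lt a ε_pos
      exact ⟨zn, hznD, fun _ => ⟨a, ha, by rwa [dist_comm]⟩⟩
  choose z hzD hznear using hzex
  have mono : Monotone (fun N => ⋃ n ∈ Finset.range N, As n) := by
    intro a b hab
    exact Set.biUnion_subset_biUnion_left (fun n hn => Finset.mem_range.mpr
      (lt_of_lt_of_le (Finset.mem_range.mp hn) hab))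
  have cover' : (⋃ N, ⋃ n ∈ Finset.range N, As n) = Set.univ := by
    rw [← As_cover]
    ext x
    simp only [Set.mem_iUnion, Finset.mem_range]
    exact ⟨fun ⟨_, n, _, hx⟩ => ⟨n, hx⟩, fun ⟨n, hx⟩ => ⟨n+1, n, Nat.lt_succ_self n, hx⟩⟩
  have tends := tendsto_measure_iUnion_atTop (μ := νm) mono
  rw [cover', measure_univ] at tends
  have hlt : (1 : ℝ≥0∞) - ENNReal.ofReal ε < 1 :=
    ENNReal.sub_lt_self ENNReal.one_ne_top one_ne_zero (ENNReal.ofReal_pos.mpr ε_pos).ne'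
  obtain ⟨N, hN⟩ := (tends.eventually (eventually_gt_nhds hlt)).exists
  simp only [Function.comp] at hN
  set SN : Set E := ⋃ n ∈ Finset.range N, As n with hSN
  have SN_mble : MeasurableSet SN := Finset.measurableSet_biUnion _ (fun n _ => As_mble n)
  have tail : νm SNᶜ ≤ ENNReal.ofReal ε := by
    rw [measure_compl SN_mble (measure_ne_top _ _), measure_univ]
    refine tsub_le_iff_right.mpr ?_
    calc (1:ℝ≥0∞) ≤ (1 - ENNReal.ofReal ε) + ENNReal.ofReal ε := le_tsub_add
    _ ≤ νm SN + ENNReal.ofReal ε := add_le_add_left hN.le _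
    _ = ENNReal.ofReal ε + νm SN := add_comm _ _
  set w : ℕ → ℝ := fun n => (νm (As n)).toReal with hw
  have w_nonneg : ∀ n, 0 ≤ w n := fun n => ENNReal.toReal_nonneg
  have hw_sum : ∑ n ∈ Finset.range N, w n = (νm SN).toReal := by
    rw [hSN, measure_biUnion_finset ?disj (fun n _ => As_mble n), ENNReal.toReal_sum
      (fun n _ => measure_ne_top _ _)]
    case disj => exact fun i _ j _ hij => As_disj hij
  have hσ_ub : ∑ n ∈ Finset.range N, w n ≤ 1 := by
    rw [hw_sum]
    exact ENNReal.toReal_le_of_le_ofReal one_pos.le (by simpa using prob_le_one)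
  have hσ_lb : 1 - ε ≤ ∑ n ∈ Finset.range N, w n := by
    rw [hw_sum]
    refine (ENNReal.ofReal_le_iff_le_toReal (measure_ne_top _ _)).mp ?_
    rw [ENNReal.ofReal_sub _ ε_pos.le, ENNReal.ofReal_one]
    exact hN.le
  have hr : ∀ n, ∃ qn : ℚ, w n < qn ∧ (qn : ℝ) < w n + ε/(N+1) := by
    intro n
    have hd : 0 < ε/(N+1) := by positivity
    obtain ⟨qn, h1, h2⟩ := exists_rat_btwn (show w n < w n + ε/(N+1) by linarith)
    exact ⟨qn, h1, h2⟩
  choose rq hrq1 hrq2 using hr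
  set s : ℚ := ∑ n ∈ Finset.range N, rq n with hs
  have hsum_cast : (s : ℝ) = ∑ n ∈ Finset.range N, (rq n : ℝ) := by rw [hs]; push_cast; ring
  have hs_lb : 1 - ε ≤ (s : ℝ) := by
    rw [hsum_cast]
    exact hσ_lb.trans (Finset.sum_le_sum fun n _ => (hrq1 n).le)
  have hNd : (N : ℝ) * (ε/(N+1)) ≤ ε := by
    rw [mul_div_assoc', div_le_iff₀ (by positivity)]
    nlinarith [ε_pos]
  have hs_ub : (s : ℝ) ≤ 1 + 2*ε := by
    rw [hsum_cast]
    calc ∑ n ∈ Finset.range N, (rq n : ℝ) ≤ ∑ n ∈ Finset.range N, (w n + ε/(N+1)) :=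
          Finset.sum_le_sum fun n _ => (hrq2 n).le
    _ = (∑ n ∈ Finset.range N, w n) + N * (ε/(N+1)) := by
          rw [Finset.sum_add_distrib, Finset.sum_const, Finset.card_range, nsmul_eq_mul]
    _ ≤ 1 + 2*ε := by nlinarith [hσ_ub, ε_pos]
  have hs_pos : 0 < (s : ℝ) := by nlinarith [ε_le]
  have hs_ne : s ≠ 0 := by
    intro h0; rw [h0] at hs_pos; norm_num at hs_pos
  set q : ℕ → ℚ := fun n => rq n / s with hq
  have rq_nonneg : ∀ n, (0:ℝ) ≤ (rq n : ℝ) := fun n => le_trans (w_nonneg n) (hrq1 n).le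
  have q_nonneg : ∀ n, 0 ≤ q n := by
    intro n
    have hr0 : (0:ℚ) ≤ rq n := by exact_mod_cast rq_nonneg n
    have hs0 : (0:ℚ) < s := by exact_mod_cast hs_pos
    rw [hq]
    positivity
  have q_sum : ∑ n ∈ Finset.range N, q n = 1 := by
    rw [hq, ← Finset.sum_div, ← hs, div_self hs_ne]
  have key : ∀ T : Finset ℕ, T ⊆ Finset.range N →
      |∑ n ∈ T, (q n : ℝ) - ∑ n ∈ T, w n| ≤ 3*ε := by
    intro T hT
    have habs : |1 - (s:ℝ)| ≤ 2*ε := abs_le.mpr ⟨by linarith, by linarith⟩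
    have h1 : |∑ n ∈ T, (q n : ℝ) - ∑ n ∈ T, (rq n : ℝ)| ≤ 2*ε := by
      have hq' : ∀ n, (q n : ℝ) = (rq n : ℝ) / (s : ℝ) := by
        intro n; rw [hq]; push_cast; ring
      have hTs : ∑ n ∈ T, (rq n : ℝ) ≤ (s:ℝ) := by
        rw [hsum_cast]
        exact Finset.sum_le_sum_of_subset_of_nonneg hT fun n _ _ => rq_nonneg n
      have hT0 : 0 ≤ ∑ n ∈ T, (rq n : ℝ) := Finset.sum_nonneg fun n _ => rq_nonneg n
      have heq : ∑ n ∈ T, (q n : ℝ) - ∑ n ∈ T, (rq n : ℝ)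
          = (∑ n ∈ T, (rq n : ℝ)) * ((1 - (s:ℝ)) / (s:ℝ)) := by
        simp_rw [hq']
        rw [← Finset.sum_div]
        field_simp
      calc |∑ n ∈ T, (q n : ℝ) - ∑ n ∈ T, (rq n : ℝ)|
          = (∑ n ∈ T, (rq n : ℝ)) * (|1 - (s:ℝ)| / (s:ℝ)) := by
            rw [heq, abs_mul, abs_of_nonneg hT0, abs_div, abs_of_pos hs_pos]
        _ ≤ (s:ℝ) * (|1 - (s:ℝ)| / (s:ℝ)) := by
            exact mul_le_mul_of_nonneg_right hTs (by positivity)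
        _ = |1 - (s:ℝ)| := by field_simp
        _ ≤ 2*ε := habs
    have h2 : |∑ n ∈ T, (rq n : ℝ) - ∑ n ∈ T, w n| ≤ ε := by
      rw [← Finset.sum_sub_distrib]
      rw [abs_of_nonneg (Finset.sum_nonneg fun n _ => by linarith [hrq1 n])]
      calc ∑ n ∈ T, ((rq n : ℝ) - w n) ≤ ∑ n ∈ Finset.range N, ((rq n : ℝ) - w n) :=
            Finset.sum_le_sum_of_subset_of_nonneg hT fun n _ _ => by linarith [hrq1 n]
      _ ≤ ∑ n ∈ Finset.range N, ε/(N+1) := Finset.sum_le_sum fun n _ => by linarith [hrq2 n]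
      _ = N * (ε/(N+1)) := by rw [Finset.sum_const, Finset.card_range, nsmul_eq_mul]
      _ ≤ ε := hNd
    calc |∑ n ∈ T, (q n : ℝ) - ∑ n ∈ T, w n|
        ≤ |∑ n ∈ T, (q n : ℝ) - ∑ n ∈ T, (rq n : ℝ)|
          + |∑ n ∈ T, (rq n : ℝ) - ∑ n ∈ T, w n| := abs_sub_le _ _ _
    _ ≤ 2*ε + ε := add_le_add h1 h2
    _ = 3*ε := by ring
  -- the discrete measure
  set μm : Measure E := ∑ i : Fin N, ENNReal.ofReal ((q i : ℝ)) • Measure.dirac (z i) with hμm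
  have hμ_apply : ∀ U : Set E, MeasurableSet U →
      μm U = ∑ n ∈ (Finset.range N).filter (fun n => z n ∈ U), ENNReal.ofReal ((q n : ℝ)) := by
    intro U hU
    have h1 : μm U = ∑ i : Fin N, ENNReal.ofReal ((q (i:ℕ) : ℝ)) * (Measure.dirac (z (i:ℕ)) U) := by
      rw [hμm, Measure.coe_finset_sum]
      simp [Measure.smul_apply, smul_eq_mul]
    rw [h1]
    have h2 : ∀ i : Fin N, ENNReal.ofReal ((q (i:ℕ) : ℝ)) * (Measure.dirac (z (i:ℕ)) U)
        = (fun n => if z n ∈ U then ENNReal.ofReal ((q n : ℝ)) else 0) (i:ℕ) := by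
      intro i
      rw [Measure.dirac_apply' _ hU, Set.indicator_apply]
      by_cases hz : z (i:ℕ) ∈ U <;> simp [hz]
    simp_rw [h2]
    rw [Finset.sum_filter]
    exact Fin.sum_univ_eq_sum_range (fun n => if z n ∈ U then ENNReal.ofReal ((q n : ℝ)) else 0) N
  refine ⟨N, z, q, hzD, q_sum, q_nonneg, ?_⟩
  apply levyProkhorovEDist_le_of_forall
  intro e B he he_top B_mble
  have h4e : 4*ε < e.toReal :=
    (ENNReal.ofReal_lt_iff_lt_toReal (by positivity) he_top.ne).mp he
  have hthick : thickening (3*ε) B ⊆ thickening e.toReal B :=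
    thickening_mono (by linarith) B
  constructor
  · -- νm B ≤ μm (thickening e.toReal B) + e
    set T₁ := (Finset.range N).filter (fun n => z n ∈ thickening (3*ε) B) with hT₁
    have step1 : νm B ≤ νm (B ∩ SN) + ENNReal.ofReal ε := by
      rw [← measure_inter_add_diff B SN_mble]
      exact add_le_add_right ((measure_mono (fun x hx => hx.2)).trans tail) _
    have step2 : νm (B ∩ SN) ≤ ∑ n ∈ Finset.range N, νm (B ∩ As n) := by
      have hsub : B ∩ SN ⊆ ⋃ n ∈ Finset.range N, (B ∩ As n) := by
        rw [hSN, Set.inter_iUnion₂]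
      exact (measure_mono hsub).trans (measure_biUnion_finset_le _ _)
    have step3 : ∑ n ∈ Finset.range N, νm (B ∩ As n) ≤ ∑ n ∈ T₁, νm (As n) := by
      rw [← Finset.sum_filter_add_sum_filter_not (Finset.range N)
        (fun n => z n ∈ thickening (3*ε) B) (fun n => νm (B ∩ As n))]
      have hzero : ∀ n ∈ (Finset.range N).filter (fun n => ¬ z n ∈ thickening (3*ε) B),
          νm (B ∩ As n) = 0 := by
        intro n hn
        rcases Set.eq_empty_or_nonempty (B ∩ As n) with hBA | ⟨b, hbB, hbA⟩
        · rw [hBA, measure_empty]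
        · exfalso
          obtain ⟨a, haA, hza⟩ := hznear n ⟨b, hbA⟩
          refine (Finset.mem_filter.mp hn).2 ?_
          rw [mem_thickening_iff]
          refine ⟨b, hbB, ?_⟩
          have hab : dist a b ≤ ε := (dist_le_diam_of_mem (As_bdd n) haA hbA).trans (As_diam n)
          calc dist (z n) b ≤ dist (z n) a + dist a b := dist_triangle _ _ _
          _ ≤ ε + ε := add_le_add hza.le hab
          _ < 3*ε := by linarith
      rw [Finset.sum_eq_zero hzero, add_zero]
      exact Finset.sum_le_sum fun n _ => measure_mono Set.inter_subset_right
    have step4 : ∑ n ∈ T₁, νm (As n) ≤ ENNReal.ofReal (∑ n ∈ T₁, w n) := by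
      rw [ENNReal.ofReal_sum_of_nonneg (fun n _ => w_nonneg n)]
      exact Finset.sum_le_sum fun n _ => (ENNReal.ofReal_toReal (measure_ne_top _ _)).symm.le
    have step5 : ENNReal.ofReal (∑ n ∈ T₁, w n)
        ≤ μm (thickening (3*ε) B) + ENNReal.ofReal (3*ε) := by
      have hkey := key T₁ (Finset.filter_subset _ _)
      rw [abs_le] at hkey
      have hsum_le : ∑ n ∈ T₁, w n ≤ (∑ n ∈ T₁, (q n : ℝ)) + 3*ε := by linarith [hkey.1]
      calc ENNReal.ofReal (∑ n ∈ T₁, w n)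
          ≤ ENNReal.ofReal ((∑ n ∈ T₁, (q n : ℝ)) + 3*ε) := ENNReal.ofReal_le_ofReal hsum_le
      _ = ENNReal.ofReal (∑ n ∈ T₁, (q n : ℝ)) + ENNReal.ofReal (3*ε) := by
          rw [ENNReal.ofReal_add (Finset.sum_nonneg fun n _ => by exact_mod_cast q_nonneg n)
            (by linarith)]
      _ = μm (thickening (3*ε) B) + ENNReal.ofReal (3*ε) := by
          rw [hμ_apply _ isOpen_thickening.measurableSet, ← hT₁,
            ENNReal.ofReal_sum_of_nonneg (fun n _ => by exact_mod_cast q_nonneg n)]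
    calc νm B ≤ νm (B ∩ SN) + ENNReal.ofReal ε := step1
    _ ≤ (∑ n ∈ Finset.range N, νm (B ∩ As n)) + ENNReal.ofReal ε := add_le_add_left step2 _
    _ ≤ (∑ n ∈ T₁, νm (As n)) + ENNReal.ofReal ε := add_le_add_left step3 _
    _ ≤ ENNReal.ofReal (∑ n ∈ T₁, w n) + ENNReal.ofReal ε := add_le_add_left step4 _
    _ ≤ (μm (thickening (3*ε) B) + ENNReal.ofReal (3*ε)) + ENNReal.ofReal ε :=
        add_le_add_left step5 _
    _ ≤ μm (thickening e.toReal B) + e := by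
        rw [add_assoc, ← ENNReal.ofReal_add (by linarith) (by linarith)]
        refine add_le_add (measure_mono hthick) ?_
        rw [show 3*ε + ε = 4*ε by ring]
        exact he.le
  · -- μm B ≤ νm (thickening e.toReal B) + e
    set T₂ := (Finset.range N).filter (fun n => z n ∈ B) with hT₂
    have hμB : μm B = ENNReal.ofReal (∑ n ∈ T₂, (q n : ℝ)) := by
      rw [hμ_apply _ B_mble, ← hT₂,
        ENNReal.ofReal_sum_of_nonneg (fun n _ => by exact_mod_cast q_nonneg n)]
    have hkey := key T₂ (Finset.filter_subset _ _)
    rw [abs_le] at hkey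
    have hsum_le : ∑ n ∈ T₂, (q n : ℝ) ≤ (∑ n ∈ T₂, w n) + 3*ε := by linarith [hkey.2]
    have hWsub : (⋃ n ∈ T₂, As n) ⊆ thickening (3*ε) B := by
      intro a ha
      simp only [Set.mem_iUnion] at ha
      obtain ⟨n, hnT, haA⟩ := ha
      have hznB : z n ∈ B := (Finset.mem_filter.mp hnT).2
      obtain ⟨a₀, ha₀A, hza₀⟩ := hznear n ⟨a, haA⟩
      rw [mem_thickening_iff]
      refine ⟨z n, hznB, ?_⟩
      have haa₀ : dist a a₀ ≤ ε := (dist_le_diam_of_mem (As_bdd n) haA ha₀A).trans (As_diam n)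
      calc dist a (z n) ≤ dist a a₀ + dist a₀ (z n) := dist_triangle _ _ _
      _ ≤ ε + ε := add_le_add haa₀ (dist_comm (z n) a₀ ▸ hza₀.le)
      _ < 3*ε := by linarith
    have hW : ∑ n ∈ T₂, w n ≤ (νm (thickening (3*ε) B)).toReal := by
      have hdisj : (↑T₂ : Set ℕ).PairwiseDisjoint As := fun i _ j _ hij => As_disj hij
      have : ∑ n ∈ T₂, νm (As n) = νm (⋃ n ∈ T₂, As n) :=
        (measure_biUnion_finset hdisj (fun n _ => As_mble n)).symm
      have hle : ∑ n ∈ T₂, νm (As n) ≤ νm (thickening (3*ε) B) := this.le.trans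
        (measure_mono hWsub)
      have := ENNReal.toReal_mono (measure_ne_top _ _) hle
      rwa [ENNReal.toReal_sum (fun n _ => measure_ne_top _ _)] at this
    calc μm B = ENNReal.ofReal (∑ n ∈ T₂, (q n : ℝ)) := hμB
    _ ≤ ENNReal.ofReal ((νm (thickening (3*ε) B)).toReal + 3*ε) :=
        ENNReal.ofReal_le_ofReal (by linarith)
    _ ≤ νm (thickening (3*ε) B) + ENNReal.ofReal (3*ε) := by
        rw [ENNReal.ofReal_add ENNReal.toReal_nonneg (by linarith),
          ENNReal.ofReal_toReal (measure_ne_top _ _)]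
    _ ≤ νm (thickening e.toReal B) + e := by
        refine add_le_add (measure_mono hthick) ?_
        refine le_trans (ENNReal.ofReal_le_ofReal (by linarith : 3*ε ≤ 4*ε)) he.le

end Separability

section Sep2

variable {E : Type*} [MeasurableSpace E] [PseudoMetricSpace E] [OpensMeasurableSpace E]
  [SeparableSpace E]

private lemma probmeasure_separable : SeparableSpace (ProbabilityMeasure E) := by
  classical
  cases isEmpty_or_nonempty E with
  | inl hE =>
    haveI : IsEmpty (ProbabilityMeasure E) := by
      refine ⟨fun P => ?_⟩
      have h1 : P.toMeasure Set.univ = 1 := measure_univ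
      rw [Set.univ_eq_empty_iff.mpr hE, measure_empty] at h1
      exact zero_ne_one h1
    exact ⟨⟨∅, countable_empty, by
      rw [dense_iff_closure_eq, Set.eq_empty_of_isEmpty (closure ∅ : Set (ProbabilityMeasure E)),
        Set.eq_empty_of_isEmpty (Set.univ : Set (ProbabilityMeasure E))]⟩⟩
  | inr hE =>
    obtain ⟨D, D_ctble, D_dense⟩ := exists_countable_dense E
    haveI : Countable D := D_ctble.to_subtype
    set d₀ : E := D_dense.nonempty.choose with hd₀
    let build : (Σ n : ℕ, (Fin n → D × ℚ)) → Measure E := fun a =>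
      ∑ i : Fin a.1, ENNReal.ofReal (((a.2 i).2 : ℝ)) • Measure.dirac ((a.2 i).1 : E)
    let f : (Σ n : ℕ, (Fin n → D × ℚ)) → ProbabilityMeasure E := fun a =>
      if h : IsProbabilityMeasure (build a) then ⟨build a, h⟩
      else ⟨Measure.dirac d₀, Measure.dirac.isProbabilityMeasure⟩
    haveI : SeparableSpace (LevyProkhorov (ProbabilityMeasure E)) := by
      refine ⟨⟨Set.range (fun a => (LevyProkhorov.toMeasureEquiv (α := ProbabilityMeasure E)).symm (f a)),
        countable_range _, ?_⟩⟩
      refine Metric.denseRange_iff.mpr ?_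
      intro P r r_pos
      set νP : ProbabilityMeasure E := LevyProkhorov.toMeasureEquiv (α := ProbabilityMeasure E) P with hνP
      obtain ⟨N, z, q, hzD, q_sum, q_nonneg, hdist⟩ :=
        exists_discrete_approx νP.toMeasure r r_pos D D_dense
      set a : (Σ n : ℕ, (Fin n → D × ℚ)) := ⟨N, fun i => (⟨z i, hzD i⟩, q i)⟩ with ha
      have hbuild : build a = ∑ i : Fin N, ENNReal.ofReal ((q i : ℝ)) • Measure.dirac (z i) := rfl
      have hpm : IsProbabilityMeasure (build a) := by
        constructor
        rw [hbuild, Measure.coe_finset_sum]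
        simp only [Finset.sum_apply, Measure.smul_apply, measure_univ, smul_eq_mul, mul_one]
        rw [show (∑ i : Fin N, ENNReal.ofReal ((q (i:ℕ) : ℝ)))
            = ∑ n ∈ Finset.range N, ENNReal.ofReal ((q n : ℝ)) from
          Fin.sum_univ_eq_sum_range (fun n => ENNReal.ofReal ((q n : ℝ))) N]
        rw [← ENNReal.ofReal_sum_of_nonneg (fun n _ => by exact_mod_cast q_nonneg n)]
        rw [show (∑ n ∈ Finset.range N, ((q n : ℝ))) = ((∑ n ∈ Finset.range N, q n : ℚ) : ℝ) by
          push_cast; ring]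
        rw [q_sum]
        norm_num
      refine ⟨a, ?_⟩
      have hfa : f a = ⟨build a, hpm⟩ := dif_pos hpm
      haveI : IsFiniteMeasure (build a) := by haveI := hpm; infer_instance
      have hmin_nonneg : (0:ℝ) ≤ 4 * (min (r/5) 4⁻¹) := by
        have h0 := le_min (by positivity : (0:ℝ) ≤ r/5) (by norm_num : (0:ℝ) ≤ 4⁻¹)
        linarith
      have htoR : dist P ((LevyProkhorov.toMeasureEquiv (α := ProbabilityMeasure E)).symm (f a))
          = (levyProkhorovEDist νP.toMeasure (build a)).toReal := by
        rw [LevyProkhorov.dist_probabilityMeasure_def, levyProkhorovDist]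
        congr 1
        rw [hfa]
        rfl
      rw [htoR]
      have h1 : (levyProkhorovEDist νP.toMeasure (build a)).toReal ≤ 4 * (min (r/5) 4⁻¹) := by
        have h2 := ENNReal.toReal_mono ENNReal.ofReal_ne_top (hbuild ▸ hdist)
        rwa [ENNReal.toReal_ofReal hmin_nonneg] at h2
      have h3 : 4 * (min (r/5) 4⁻¹) < r := by
        have h4 : min (r/5) 4⁻¹ ≤ r/5 := min_le_left _ _
        nlinarith
      linarith
    exact (LevyProkhorov.probabilityMeasureHomeomorph (Ω := E)).symm.surjective.denseRange.separableSpace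
      (LevyProkhorov.probabilityMeasureHomeomorph (Ω := E)).symm.continuous

end Sep2

section Subbasis

variable {E : Type*} [MeasurableSpace E] [TopologicalSpace E] [OpensMeasurableSpace E]

private lemma eval_continuous (f : E →ᵇ ℝ) :
    Continuous fun ν : ProbabilityMeasure E => ∫ x, f x ∂(ν : Measure E) := by
  rw [continuous_iff_continuousAt]
  intro ν
  exact (ProbabilityMeasure.tendsto_iff_forall_integral_tendsto.mp
    (Filter.tendsto_id (x := 𝓝 ν))) f

private lemma topo_eq :
    (inferInstance : TopologicalSpace (ProbabilityMeasure E)) = TopologicalSpace.generateFrom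
      {s | ∃ (f : E →ᵇ ℝ) (u : Set ℝ), IsOpen u ∧
        s = (fun ν : ProbabilityMeasure E => ∫ x, f x ∂(ν : Measure E)) ⁻¹' u} := by
  set 𝒮 : Set (Set (ProbabilityMeasure E)) :=
    {s | ∃ (f : E →ᵇ ℝ) (u : Set ℝ), IsOpen u ∧
      s = (fun ν : ProbabilityMeasure E => ∫ x, f x ∂(ν : Measure E)) ⁻¹' u} with h𝒮
  refine le_antisymm (le_generateFrom ?_) ?_
  · rintro s ⟨f, u, hu, rfl⟩
    exact hu.preimage (eval_continuous f)
  · refine continuous_id_iff_le.mp ?_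
    have heval : ∀ f : E →ᵇ ℝ, @Continuous _ _ (TopologicalSpace.generateFrom 𝒮) _
        (fun ν : ProbabilityMeasure E => ∫ x, f x ∂(ν : Measure E)) := by
      intro f
      refine (@continuous_def _ _ (TopologicalSpace.generateFrom 𝒮) _ _).mpr ?_
      intro u hu
      exact @TopologicalSpace.isOpen_generateFrom_of_mem _ 𝒮 _ ⟨f, u, hu, rfl⟩
    refine (@continuous_iff_continuousAt _ _ (TopologicalSpace.generateFrom 𝒮) _ id).mpr ?_
    intro ν
    show Filter.Tendsto id (@nhds _ (TopologicalSpace.generateFrom 𝒮) ν) (𝓝 ν)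
    exact (ProbabilityMeasure.tendsto_iff_forall_integral_tendsto).mpr
      (fun f => @Continuous.tendsto _ _ (TopologicalSpace.generateFrom 𝒮) _ _ (heval f) ν)

end Subbasis


section Moments

variable {E : Type*} [MeasurableSpace E] [TopologicalSpace E]

private noncomputable def Tmap {k : ℕ} (φ : Fin k → (E →ᵇ ℝ)) (ν : ProbabilityMeasure E) : Fin k → ℝ :=
  fun i => ∫ x, φ i x ∂(ν : Measure E)

variable [OpensMeasurableSpace E]

private lemma Tmap_continuous {k : ℕ} (φ : Fin k → (E →ᵇ ℝ)) : Continuous (Tmap φ) :=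
  continuous_pi fun i => eval_continuous (φ i)

private lemma Tmap_measurable [MeasurableSpace (ProbabilityMeasure E)]
    [BorelSpace (ProbabilityMeasure E)] {k : ℕ} (φ : Fin k → (E →ᵇ ℝ)) :
    Measurable (Tmap φ) :=
  (Tmap_continuous φ).measurable

private lemma Tmap_mem_box {k : ℕ} (φ : Fin k → (E →ᵇ ℝ)) (ν : ProbabilityMeasure E) :
    Tmap φ ν ∈ Set.pi Set.univ (fun i => Set.Icc (-‖φ i‖) ‖φ i‖) := by
  intro i _
  rw [Set.mem_Icc, ← abs_le]
  have h1 : ‖∫ x, φ i x ∂(ν : Measure E)‖ ≤ ‖φ i‖ * ((ν : Measure E) Set.univ).toReal :=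
    norm_integral_le_of_norm_le_const (Filter.Eventually.of_forall fun x => (φ i).norm_coe_le_norm x)
  rw [measure_univ] at h1
  exact (by simpa using h1 : |∫ x, φ i x ∂(ν : Measure E)| ≤ ‖φ i‖)

end Moments

section MapEq

variable {E : Type*} [MeasurableSpace E] [TopologicalSpace E] [PolishSpace E] [BorelSpace E]
  [MeasurableSpace (ProbabilityMeasure E)] [BorelSpace (ProbabilityMeasure E)]

private lemma map_eq
    (Υ₁ Υ₂ : Measure (ProbabilityMeasure E))
    [IsProbabilityMeasure Υ₁] [IsProbabilityMeasure Υ₂]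
    (h : ∀ (k : ℕ), 1 ≤ k → ∀ φ : Fin k → (E →ᵇ ℝ),
      ∫ ν, ∏ i, (∫ x, φ i x ∂(ν : Measure E)) ∂Υ₁
        = ∫ ν, ∏ i, (∫ x, φ i x ∂(ν : Measure E)) ∂Υ₂)
    {k : ℕ} (hk : 1 ≤ k) (φ : Fin k → (E →ᵇ ℝ)) :
    Υ₁.map (Tmap φ) = Υ₂.map (Tmap φ) := by
  classical
  set C : Set (Fin k → ℝ) := Set.pi Set.univ (fun i => Set.Icc (-‖φ i‖) ‖φ i‖) with hC
  have hC_cpt : IsCompact C := isCompact_univ_pi (fun i => isCompact_Icc)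
  have hC_mble : MeasurableSet C := MeasurableSet.univ_pi (fun i => measurableSet_Icc)
  haveI : CompactSpace C := isCompact_iff_compactSpace.mp hC_cpt
  have hT_mble : Measurable (Tmap φ) := Tmap_measurable φ
  have emb : MeasurableEmbedding (Subtype.val : C → (Fin k → ℝ)) :=
    MeasurableEmbedding.subtype_coe hC_mble
  have hnull : ∀ (Υ : Measure (ProbabilityMeasure E)), (Υ.map (Tmap φ)) Cᶜ = 0 := by
    intro Υ
    have hpre : Tmap φ ⁻¹' Cᶜ = (∅ : Set (ProbabilityMeasure E)) :=
      Set.eq_empty_iff_forall_notMem.mpr (fun ν hν => hν (Tmap_mem_box φ ν))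
    rw [Measure.map_apply hT_mble hC_mble.compl, hpre, measure_empty]
  have hback : ∀ μ : Measure (Fin k → ℝ), μ Cᶜ = 0 →
      (μ.comap (Subtype.val : C → _)).map Subtype.val = μ := by
    intro μ hμ
    rw [emb.map_comap, Subtype.range_coe, Measure.restrict_eq_self_of_ae_mem]
    rw [ae_iff]
    exact hμ
  set μ₁ : Measure (Fin k → ℝ) := Υ₁.map (Tmap φ) with hμ₁
  set μ₂ : Measure (Fin k → ℝ) := Υ₂.map (Tmap φ) with hμ₂
  haveI : IsProbabilityMeasure μ₁ := Measure.isProbabilityMeasure_map hT_mble.aemeasurable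
  haveI : IsProbabilityMeasure μ₂ := Measure.isProbabilityMeasure_map hT_mble.aemeasurable
  set μ₁' : Measure C := μ₁.comap Subtype.val with hμ₁'
  set μ₂' : Measure C := μ₂.comap Subtype.val with hμ₂'
  have huniv : ∀ (Υ : Measure (ProbabilityMeasure E)) (_ : IsProbabilityMeasure Υ),
      ((Υ.map (Tmap φ)).comap (Subtype.val : C → _)) Set.univ = 1 := by
    intro Υ hΥ
    haveI : IsProbabilityMeasure (Υ.map (Tmap φ)) := Measure.isProbabilityMeasure_map hT_mble.aemeasurable
    rw [emb.comap_apply, Set.image_univ, Subtype.range_coe]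
    exact (prob_compl_eq_zero_iff hC_mble).mp (hnull Υ)
  haveI hfin₁ : IsFiniteMeasure μ₁' := ⟨by rw [hμ₁', hμ₁, huniv Υ₁ ‹_›]; exact ENNReal.one_lt_top⟩
  haveI hfin₂ : IsFiniteMeasure μ₂' := ⟨by rw [hμ₂', hμ₂, huniv Υ₂ ‹_›]; exact ENNReal.one_lt_top⟩
  -- integrability of continuous functions on the compact box
  have int_all : ∀ (F : C(C, ℝ)) (μ : Measure C) [IsFiniteMeasure μ],
      Integrable (fun x => F x) μ := fun F μ _ =>
    F.continuous.integrable_of_hasCompactSupport (HasCompactSupport.of_compactSpace _)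
  -- continuity of the integration functional
  have hcont : ∀ (μ : Measure C) (_ : IsFiniteMeasure μ),
      Continuous (fun F : C(C, ℝ) => ∫ x, F x ∂μ) := by
    intro μ hfin
    refine (LipschitzWith.of_dist_le_mul (K := (μ Set.univ).toNNReal) ?_).continuous
    intro F G
    rw [Real.dist_eq, ← integral_sub (int_all F μ) (int_all G μ)]
    have hb : ∀ x, ‖F x - G x‖ ≤ ‖F - G‖ := fun x => by
      simpa using (F - G).norm_coe_le_norm x
    have hle := norm_integral_le_of_norm_le_const (μ := μ) (f := fun x => F x - G x)
      (Filter.Eventually.of_forall hb)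
    rw [Real.norm_eq_abs] at hle
    calc |∫ x, (F x - G x) ∂μ| ≤ ‖F - G‖ * (μ Set.univ).toReal := hle
    _ = ((μ Set.univ).toNNReal : ℝ) * dist F G := by
        rw [dist_eq_norm]
        exact mul_comm _ _
  -- coordinate functions and monomials
  set coord : Fin k → C(C, ℝ) := fun i =>
    ⟨fun x => (x : Fin k → ℝ) i, (continuous_apply i).comp continuous_subtype_val⟩ with hcoord
  set M : Set C(C, ℝ) := {F | ∃ (m : ℕ) (σ : Fin m → Fin k), F = ∏ j : Fin m, coord (σ j)} with hM
  -- equal integrals on monomials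
  have hmom : ∀ F ∈ M, ∫ x, F x ∂μ₁' = ∫ x, F x ∂μ₂' := by
    rintro F ⟨m, σ, rfl⟩
    have hconts : Continuous (fun y : Fin k → ℝ => ∏ j : Fin m, y (σ j)) :=
      continuous_finset_prod _ fun j _ => continuous_apply (σ j)
    have hred : ∀ (Υ : Measure (ProbabilityMeasure E)) (_ : IsProbabilityMeasure Υ),
        ∫ x, (∏ j : Fin m, coord (σ j)) x ∂((Υ.map (Tmap φ)).comap (Subtype.val : C → _))
          = ∫ ν, ∏ j : Fin m, (∫ x, φ (σ j) x ∂(ν : Measure E)) ∂Υ := by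
      intro Υ hΥ
      have h1 : ∀ x : C, (∏ j : Fin m, coord (σ j)) x = ∏ j : Fin m, (x : Fin k → ℝ) (σ j) := by
        intro x
        rw [ContinuousMap.prod_apply]
        rfl
      calc ∫ x, (∏ j : Fin m, coord (σ j)) x ∂((Υ.map (Tmap φ)).comap (Subtype.val : C → _))
          = ∫ x, ∏ j : Fin m, ((x : Fin k → ℝ) (σ j))
              ∂((Υ.map (Tmap φ)).comap (Subtype.val : C → _)) := by simp_rw [h1]
      _ = ∫ y, ∏ j : Fin m, y (σ j)
              ∂(((Υ.map (Tmap φ)).comap (Subtype.val : C → _)).map Subtype.val) := by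
          rw [integral_map emb.measurable.aemeasurable hconts.aestronglyMeasurable]
      _ = ∫ y, ∏ j : Fin m, y (σ j) ∂(Υ.map (Tmap φ)) := by rw [hback _ (hnull Υ)]
      _ = ∫ ν, ∏ j : Fin m, (Tmap φ ν) (σ j) ∂Υ :=
          integral_map hT_mble.aemeasurable hconts.aestronglyMeasurable
      _ = ∫ ν, ∏ j : Fin m, (∫ x, φ (σ j) x ∂(ν : Measure E)) ∂Υ := rfl
    rw [hμ₁', hμ₁, hμ₂', hμ₂, hred Υ₁ ‹_›, hred Υ₂ ‹_›]
    rcases Nat.eq_zero_or_pos m with hm | hm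
    · subst hm
      simp
    · exact h m hm (φ ∘ σ)
  -- M is multiplicative, contains 1
  have hM_mul : ∀ F ∈ M, ∀ G ∈ M, F * G ∈ M := by
    rintro F ⟨m₁, σ₁, rfl⟩ G ⟨m₂, σ₂, rfl⟩
    refine ⟨m₁ + m₂, Fin.append σ₁ σ₂, ?_⟩
    rw [Fin.prod_univ_add]
    congr 1
    · exact (Finset.prod_congr rfl fun j _ => by rw [Fin.append_left]).symm
    · exact (Finset.prod_congr rfl fun j _ => by rw [Fin.append_right]).symm
  have hM_one : (1 : C(C, ℝ)) ∈ M := ⟨0, Fin.elim0, by simp⟩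
  -- equal integrals on the adjoined algebra
  have hPA : ∀ F ∈ (Algebra.adjoin ℝ M : Subalgebra ℝ C(C, ℝ)),
      ∫ x, F x ∂μ₁' = ∫ x, F x ∂μ₂' := by
    intro F hF
    have hF' : F ∈ Submodule.span ℝ M := by
      let Msub : Submonoid C(C, ℝ) :=
        { carrier := M, one_mem' := hM_one, mul_mem' := fun hF hG => hM_mul _ hF _ hG }
      have h1 : F ∈ Subalgebra.toSubmodule (Algebra.adjoin ℝ M) := hF
      rw [Algebra.adjoin_eq_span] at h1
      have h2 : Submonoid.closure M = Msub := Submonoid.closure_eq Msub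
      rwa [h2] at h1
    refine Submodule.span_induction ?_ ?_ ?_ ?_ hF'
    · exact hmom
    · simp
    · intro F G _ _ hF hG
      simp only [ContinuousMap.add_apply]
      rw [integral_add (int_all F μ₁') (int_all G μ₁'),
        integral_add (int_all F μ₂') (int_all G μ₂'), hF, hG]
    · intro c F _ hF
      simp only [ContinuousMap.smul_apply]
      rw [integral_smul, integral_smul, hF]
  -- separates points
  have hsep : (Algebra.adjoin ℝ M : Subalgebra ℝ C(C, ℝ)).SeparatesPoints := by
    intro x y hxy
    have hxy' : (x : Fin k → ℝ) ≠ (y : Fin k → ℝ) := fun hc => hxy (Subtype.ext hc)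
    obtain ⟨i, hi⟩ := Function.ne_iff.mp hxy'
    refine ⟨⇑(coord i), ⟨coord i, ?_, rfl⟩, hi⟩
    exact Algebra.subset_adjoin ⟨1, fun _ => i, (Fin.prod_univ_one (fun _ : Fin 1 => coord i)).symm⟩
  have htop := ContinuousMap.subalgebra_topologicalClosure_eq_top_of_separatesPoints _ hsep
  have hPall : ∀ F : C(C, ℝ), ∫ x, F x ∂μ₁' = ∫ x, F x ∂μ₂' := by
    intro F
    have hFmem : F ∈ closure ((Algebra.adjoin ℝ M : Subalgebra ℝ C(C, ℝ)) : Set C(C, ℝ)) := by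
      rw [← Subalgebra.topologicalClosure_coe, htop]
      trivial
    have hclosed : IsClosed {F : C(C, ℝ) | ∫ x, F x ∂μ₁' = ∫ x, F x ∂μ₂'} :=
      isClosed_eq (hcont μ₁' hfin₁) (hcont μ₂' hfin₂)
    exact (hclosed.closure_subset_iff.mpr hPA) hFmem
  -- conclude equality of the comap measures
  have hμeq : μ₁' = μ₂' := by
    apply ext_of_forall_lintegral_eq_of_IsFiniteMeasure
    intro g
    have hg : Continuous fun x : C => ((g x : ℝ)) := NNReal.continuous_coe.comp g.continuous
    set G : C(C, ℝ) := ⟨fun x => (g x : ℝ), hg⟩ with hG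
    rw [lintegral_coe_eq_integral _ (int_all G μ₁'), lintegral_coe_eq_integral _ (int_all G μ₂')]
    congr 1
    exact hPall G
  calc Υ₁.map (Tmap φ) = μ₁'.map Subtype.val := (hback _ (hnull Υ₁)).symm
  _ = μ₂'.map Subtype.val := by rw [hμeq]
  _ = Υ₂.map (Tmap φ) := hback _ (hnull Υ₂)

end MapEq

/-- **Proposition A.2**: two Borel probability measures `Υ₁, Υ₂` on `P(E)` (the space of Borel
probability measures on a Polish space `E`, with the weak topology and its Borel σ-algebra)
that have the same "mixed moments" `∫ ∏_{i=1}^k ⟨φ_i, ν⟩ Υ(dν)` for all `k ≥ 1` and bounded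
continuous `φ_i : E → ℝ` must be equal. -/
theorem stmt1 {E : Type*} [MeasurableSpace E] [TopologicalSpace E] [PolishSpace E] [BorelSpace E]
    [MeasurableSpace (ProbabilityMeasure E)] [BorelSpace (ProbabilityMeasure E)]
    (Υ₁ Υ₂ : Measure (ProbabilityMeasure E))
    [IsProbabilityMeasure Υ₁] [IsProbabilityMeasure Υ₂]
    (h : ∀ (k : ℕ), 1 ≤ k → ∀ φ : Fin k → (E →ᵇ ℝ),
      ∫ ν, ∏ i, (∫ x, φ i x ∂(ν : Measure E)) ∂Υ₁
        = ∫ ν, ∏ i, (∫ x, φ i x ∂(ν : Measure E)) ∂Υ₂) :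
    Υ₁ = Υ₂ := by
  classical
  letI := upgradeIsCompletelyMetrizable E
  haveI : SeparableSpace (ProbabilityMeasure E) := probmeasure_separable
  haveI : SecondCountableTopology (ProbabilityMeasure E) := by
    letI : PseudoMetricSpace (ProbabilityMeasure E) :=
      TopologicalSpace.pseudoMetrizableSpacePseudoMetric (ProbabilityMeasure E)
    exact @UniformSpace.secondCountable_of_separable _ _ _ ‹_›
  set S : Set (Set (ProbabilityMeasure E)) := {s | ∃ (k : ℕ), 1 ≤ k ∧ ∃ (φ : Fin k → (E →ᵇ ℝ))
    (B : Set (Fin k → ℝ)), MeasurableSet B ∧ s = Tmap φ ⁻¹' B} with hS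
  have hS_pi : IsPiSystem S := by
    rintro s ⟨k, hk, φ, B, hB, rfl⟩ t ⟨l, hl, ψ, B', hB', rfl⟩ -
    have hcast : Measurable (fun x : Fin (k+l) → ℝ => fun i : Fin k => x (Fin.castAdd l i)) :=
      measurable_pi_lambda _ (fun i => measurable_pi_apply _)
    have hnat : Measurable (fun x : Fin (k+l) → ℝ => fun i : Fin l => x (Fin.natAdd k i)) :=
      measurable_pi_lambda _ (fun i => measurable_pi_apply _)
    refine ⟨k + l, le_trans hk (Nat.le_add_right _ _), Fin.append φ ψ,
      ((fun x : Fin (k+l) → ℝ => fun i : Fin k => x (Fin.castAdd l i)) ⁻¹' B)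
        ∩ ((fun x : Fin (k+l) → ℝ => fun i : Fin l => x (Fin.natAdd k i)) ⁻¹' B'),
      (hcast hB).inter (hnat hB'), ?_⟩
    ext ν
    have h₁ : (fun i : Fin k => Tmap (Fin.append φ ψ) ν (Fin.castAdd l i)) = Tmap φ ν :=
      funext fun i => by simp [Tmap, Fin.append_left]
    have h₂ : (fun i : Fin l => Tmap (Fin.append φ ψ) ν (Fin.natAdd k i)) = Tmap ψ ν :=
      funext fun i => by simp [Tmap, Fin.append_right]
    simp only [Set.mem_inter_iff, Set.mem_preimage, h₁, h₂]
  have hm_eq : ‹MeasurableSpace (ProbabilityMeasure E)› = MeasurableSpace.generateFrom S := by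
    refine le_antisymm ?_ ?_
    · rw [BorelSpace.measurable_eq (α := ProbabilityMeasure E),
        borel_eq_generateFrom_of_subbasis topo_eq]
      refine MeasurableSpace.generateFrom_le ?_
      rintro s ⟨f, u, hu, rfl⟩
      refine MeasurableSpace.measurableSet_generateFrom ?_
      refine ⟨1, le_refl 1, fun _ => f, (fun x : Fin 1 → ℝ => x 0) ⁻¹' u,
        (measurable_pi_apply 0) hu.measurableSet, ?_⟩
      ext ν
      simp [Tmap]
    · refine MeasurableSpace.generateFrom_le ?_
      rintro s ⟨k, hk, φ, B, hB, rfl⟩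
      exact (Tmap_measurable φ) hB
  refine ext_of_generate_finite S hm_eq hS_pi ?_ (by simp)
  rintro s ⟨k, hk, φ, B, hB, rfl⟩
  rw [← Measure.map_apply (Tmap_measurable φ) hB, ← Measure.map_apply (Tmap_measurable φ) hB,
    map_eq Υ₁ Υ₂ h hk φ]
end

section
/- Let E be a Polish space and Υ₁, Υ₂ Borel probability measures on P(E). If ∫ ∏_{i=1}^k ⟨φ_i,ν⟩ Υ₁(dν) = ∫ ∏_{i=1}^k ⟨φ_i,ν⟩ Υ₂(dν) for all k ≥ 1 and bounded continuous φ_i, then for all k ≥ 1, all bounded continuous ψ₁,…,ψ_k : ℝ → ℝ and bounded continuous φ₁,…,φ_k : E → ℝ, ∫ ∏_{i=1}^k ψ_i(⟨φ_i,ν⟩) Υ₁(dν) = ∫ ∏_{i=1}^k ψ_i(⟨φ_i,ν⟩) Υ₂(dν). -/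
open MeasureTheory
open scoped BoundedContinuousFunction

/-- If two Borel probability measures `Υ₁, Υ₂` on `P(E)` have the same mixed moments
`∫ ∏_{i=1}^k ⟨φ_i, ν⟩ Υ(dν)` for all `k ≥ 1` and bounded continuous `φ_i : E → ℝ`, then for all
`k ≥ 1`, all bounded continuous `ψ_i : ℝ → ℝ` and bounded continuous `φ_i : E → ℝ`,
`∫ ∏_{i=1}^k ψ_i(⟨φ_i, ν⟩) Υ₁(dν) = ∫ ∏_{i=1}^k ψ_i(⟨φ_i, ν⟩) Υ₂(dν)`. -/
theorem stmt2 {E : Type*} [MeasurableSpace E] [TopologicalSpace E] [PolishSpace E] [BorelSpace E]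
    [MeasurableSpace (ProbabilityMeasure E)] [BorelSpace (ProbabilityMeasure E)]
    (Υ₁ Υ₂ : Measure (ProbabilityMeasure E))
    [IsProbabilityMeasure Υ₁] [IsProbabilityMeasure Υ₂]
    (h : ∀ (k : ℕ), 1 ≤ k → ∀ φ : Fin k → (E →ᵇ ℝ),
      ∫ ν, ∏ i, (∫ x, φ i x ∂(ν : Measure E)) ∂Υ₁
        = ∫ ν, ∏ i, (∫ x, φ i x ∂(ν : Measure E)) ∂Υ₂) :
    ∀ (k : ℕ), 1 ≤ k → ∀ (ψ : Fin k → (ℝ →ᵇ ℝ)) (φ : Fin k → (E →ᵇ ℝ)),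
      ∫ ν, ∏ i, ψ i (∫ x, φ i x ∂(ν : Measure E)) ∂Υ₁
        = ∫ ν, ∏ i, ψ i (∫ x, φ i x ∂(ν : Measure E)) ∂Υ₂ := by
  classical
  intro k hk ψ φ
  set K : Set (Fin k → ℝ) := Set.Icc (fun i => -‖φ i‖) (fun i => ‖φ i‖) with hKdef
  have hKc : IsCompact K := isCompact_Icc
  haveI : CompactSpace K := isCompact_iff_compactSpace.mp hKc
  have hmem : ∀ ν : ProbabilityMeasure E,
      (fun i => ∫ x, φ i x ∂(ν : Measure E)) ∈ K := by
    intro ν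
    constructor <;> intro i
    · have := BoundedContinuousFunction.norm_integral_le_norm (ν : Measure E) (φ i)
      simpa using neg_le_of_abs_le (by simpa [Real.norm_eq_abs] using this)
    · have := BoundedContinuousFunction.norm_integral_le_norm (ν : Measure E) (φ i)
      exact le_of_abs_le (by simpa [Real.norm_eq_abs] using this)
  have hΦcont : Continuous fun ν : ProbabilityMeasure E =>
      (fun i => ∫ x, φ i x ∂(ν : Measure E)) :=
    continuous_pi fun i =>
      ProbabilityMeasure.continuous_integral_boundedContinuousFunction (φ i)
  set Φ : C(ProbabilityMeasure E, K) :=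
    ⟨fun ν => ⟨fun i => ∫ x, φ i x ∂(ν : Measure E), hmem ν⟩, hΦcont.subtype_mk _⟩ with hΦdef
  -- integrability of compositions
  have hint : ∀ (Υ : Measure (ProbabilityMeasure E)), IsProbabilityMeasure Υ →
      ∀ f : C(K, ℝ), Integrable (fun ν => f (Φ ν)) Υ := by
    intro Υ hΥ f
    exact ((ContinuousMap.equivBoundedOfCompact K ℝ f).compContinuous Φ).integrable Υ
  -- the coordinate functions
  set coord : Fin k → C(K, ℝ) := fun i =>
    ⟨fun p => (p : Fin k → ℝ) i, (continuous_apply i).comp continuous_subtype_val⟩ with hcoordd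
  set A : Subalgebra ℝ C(K, ℝ) := Algebra.adjoin ℝ (Set.range coord) with hAdef
  have hsep : A.SeparatesPoints := by
    intro x y hxy
    have : (x : Fin k → ℝ) ≠ (y : Fin k → ℝ) := fun hc => hxy (Subtype.ext hc)
    obtain ⟨i, hi⟩ := Function.ne_iff.mp this
    exact ⟨coord i, ⟨coord i, Algebra.subset_adjoin ⟨i, rfl⟩, rfl⟩, hi⟩
  have hAtop : A.topologicalClosure = ⊤ :=
    ContinuousMap.subalgebra_topologicalClosure_eq_top_of_separatesPoints A hsep
  -- equality of integrals on A
  have hAeq : ∀ f ∈ A, ∫ ν, f (Φ ν) ∂Υ₁ = ∫ ν, f (Φ ν) ∂Υ₂ := by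
    intro f hf
    have hf' : f ∈ Submodule.span ℝ (Submonoid.closure (Set.range coord) : Set C(K, ℝ)) := by
      rw [← Algebra.adjoin_eq_span]; exact hf
    induction hf' using Submodule.span_induction with
    | mem m hm =>
      obtain ⟨l, hl, rfl⟩ := Submonoid.exists_list_of_mem_closure hm
      -- choose indices
      choose g hg using fun j : Fin l.length => hl (l.get j) (l.get_mem _)
      have hprod : l.prod = ∏ j, coord (g j) := by
        conv_lhs => rw [← List.ofFn_get l]
        rw [List.prod_ofFn]
        exact Finset.prod_congr rfl fun j _ => (hg j).symm
      have hev : ∀ ν, (l.prod) (Φ ν) = ∏ j, ∫ x, φ (g j) x ∂(ν : Measure E) := by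
        intro ν
        rw [hprod]
        rw [ContinuousMap.prod_apply]
        rfl
      have e1 : ∫ ν, (l.prod) (Φ ν) ∂Υ₁
          = ∫ ν, ∏ j, ∫ x, φ (g j) x ∂(ν : Measure E) ∂Υ₁ :=
        integral_congr_ae (Filter.Eventually.of_forall fun ν => hev ν)
      have e2 : ∫ ν, (l.prod) (Φ ν) ∂Υ₂
          = ∫ ν, ∏ j, ∫ x, φ (g j) x ∂(ν : Measure E) ∂Υ₂ :=
        integral_congr_ae (Filter.Eventually.of_forall fun ν => hev ν)
      rw [e1, e2]
      rcases Nat.eq_zero_or_pos l.length with h0 | hpos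
      · haveI : IsEmpty (Fin l.length) := by rw [h0]; infer_instance
        simp
      · exact h l.length hpos fun j => φ (g j)
    | zero => simp
    | add x y hx hy ihx ihy =>
      have hx' : x ∈ A := by rw [hAdef, ← Subalgebra.mem_toSubmodule, Algebra.adjoin_eq_span]; exact hx
      have hy' : y ∈ A := by rw [hAdef, ← Subalgebra.mem_toSubmodule, Algebra.adjoin_eq_span]; exact hy
      simp only [ContinuousMap.add_apply]
      rw [integral_add (hint Υ₁ ‹_› x) (hint Υ₁ ‹_› y),
        integral_add (hint Υ₂ ‹_› x) (hint Υ₂ ‹_› y), ihx hx', ihy hy']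
    | smul a x hx ihx =>
      have hx' : x ∈ A := by rw [hAdef, ← Subalgebra.mem_toSubmodule, Algebra.adjoin_eq_span]; exact hx
      simp only [ContinuousMap.smul_apply, smul_eq_mul]
      rw [integral_const_mul, integral_const_mul, ihx hx']
  -- continuity of the two integration functionals
  have hcont : ∀ (Υ : Measure (ProbabilityMeasure E)), IsProbabilityMeasure Υ →
      Continuous fun f : C(K, ℝ) => ∫ ν, f (Φ ν) ∂Υ := by
    intro Υ hΥ
    refine (LipschitzWith.mk_one ?_).continuous
    intro f g
    rw [Real.dist_eq, ← integral_sub (hint Υ hΥ f) (hint Υ hΥ g)]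
    have : ∀ ν : ProbabilityMeasure E, ‖f (Φ ν) - g (Φ ν)‖ ≤ dist f g := by
      intro ν
      simpa [dist_eq_norm] using ContinuousMap.dist_apply_le_dist (f := f) (g := g) (Φ ν)
    calc |∫ ν, (f (Φ ν) - g (Φ ν)) ∂Υ| ≤ dist f g * (Υ Set.univ).toReal :=
          norm_integral_le_of_norm_le_const (Filter.Eventually.of_forall this)
      _ = dist f g := by simp
  -- closed set of functions with equal integrals contains the closure of A
  have hall : ∀ f : C(K, ℝ), ∫ ν, f (Φ ν) ∂Υ₁ = ∫ ν, f (Φ ν) ∂Υ₂ := by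
    intro f
    have hfcl : f ∈ closure (A : Set C(K, ℝ)) := by
      have : f ∈ A.topologicalClosure := hAtop ▸ Algebra.mem_top
      exact this
    have hsub : closure (A : Set C(K, ℝ)) ⊆
        {f : C(K, ℝ) | ∫ ν, f (Φ ν) ∂Υ₁ = ∫ ν, f (Φ ν) ∂Υ₂} :=
      closure_minimal (fun g hg => hAeq g hg) (isClosed_eq (hcont Υ₁ ‹_›) (hcont Υ₂ ‹_›))
    exact hsub hfcl
  -- apply to the product of the ψ's
  have := hall ⟨fun p => ∏ i, ψ i ((p : Fin k → ℝ) i), by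
    apply continuous_finset_prod
    intro i _
    exact (ψ i).continuous.comp ((continuous_apply i).comp continuous_subtype_val)⟩
  simpa [Φ] using this
end

section
/- Let (Ω,F,P) be a probability space, X and Y random variables with values in Polish spaces S and T. Then there exists a Borel measurable function G : S × [0,1] → T such that for any random variable U uniformly distributed on [0,1] and independent of X (possibly on an extension of the space), the pair (X, G(X,U)) has the same joint law as (X,Y). -/
open MeasureTheory ProbabilityTheory Set Filter Topology
open scoped ENNReal

section quantile

variable {S : Type*} [MeasurableSpace S]

/-- Quantile function associated with a family of measures on `ℝ`. -/
noncomputable def qtl (η : S → Measure ℝ) (p : S × ℝ) : ℝ :=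
  sInf {x | ENNReal.ofReal p.2 ≤ η p.1 (Set.Iic x)}

variable {η : S → Measure ℝ}

lemma qtl_le_iff (h1 : ∀ s, η s (Iic 1) = 1) (h0 : ∀ s x, x ≤ -1 → η s (Iic x) = 0)
    (htop : ∀ s x, η s (Iic x) ≠ ∞)
    {s : S} {u : ℝ} (hu : u ∈ Ioc (0 : ℝ) 1) (x : ℝ) :
    qtl η (s, u) ≤ x ↔ ENNReal.ofReal u ≤ η s (Iic x) := by
  set A : Set ℝ := {x | ENNReal.ofReal u ≤ η s (Iic x)} with hA
  have hupos : (0 : ℝ≥0∞) < ENNReal.ofReal u := ENNReal.ofReal_pos.mpr hu.1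
  have hne : A.Nonempty := ⟨1, by
    simp only [hA, mem_setOf_eq, h1 s]
    exact ENNReal.ofReal_le_one.mpr hu.2⟩
  have hbdd : BddBelow A := by
    refine ⟨-1, fun y hy => ?_⟩
    by_contra hlt
    push_neg at hlt
    rw [hA, mem_setOf_eq, h0 s y hlt.le] at hy
    exact absurd hy hupos.not_ge
  constructor
  · intro h
    have hqA : sInf A ∈ A := by
      set q := sInf A with hq
      have hInter : Iic q = ⋂ n : ℕ, Iic (q + 1 / (n + 1)) := by
        ext y
        simp only [mem_Iic, mem_iInter]
        constructor
        · intro hy n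
          have : (0 : ℝ) < 1 / (n + 1) := by positivity
          linarith
        · intro hy
          by_contra hlt
          push_neg at hlt
          obtain ⟨n, hn⟩ := exists_nat_one_div_lt (sub_pos.mpr hlt)
          have := hy n
          linarith
      have htend : Tendsto (fun n : ℕ => η s (Iic (q + 1 / (n + 1)))) atTop
          (𝓝 (η s (⋂ n : ℕ, Iic (q + 1 / (n + 1))))) := by
        refine tendsto_measure_iInter_atTop (fun n => measurableSet_Iic.nullMeasurableSet)
          (fun m n hmn => Iic_subset_Iic.mpr (by
            have h1n : (1 : ℝ) / (n + 1) ≤ 1 / (m + 1) := by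
              apply one_div_le_one_div_of_le (by positivity)
              exact_mod_cast add_le_add_left (Nat.cast_le.mpr hmn) 1
            linarith)) ⟨0, htop s _⟩
      rw [← hInter] at htend
      refine ge_of_tendsto htend (Eventually.of_forall fun n => ?_)
      have hpos : (0 : ℝ) < 1 / (n + 1) := by positivity
      obtain ⟨a, haA, halt⟩ := exists_lt_of_csInf_lt hne (lt_add_of_pos_right q hpos)
      exact le_trans haA (measure_mono (Iic_subset_Iic.mpr halt.le))
    exact le_trans hqA (measure_mono (Iic_subset_Iic.mpr h))
  · intro h
    exact csInf_le hbdd h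

lemma qtl_of_nonpos {s : S} {u : ℝ} (hu : u ≤ 0) : qtl η (s, u) = 0 := by
  have : {x | ENNReal.ofReal u ≤ η s (Set.Iic x)} = univ :=
    eq_univ_of_forall fun x => by
      simp [ENNReal.ofReal_eq_zero.mpr hu]
  rw [qtl, this, Real.sInf_of_not_bddBelow]
  intro ⟨b, hb⟩
  exact absurd (hb (mem_univ (b - 1))) (by linarith)

lemma qtl_of_one_lt (hle : ∀ s x, η s (Iic x) ≤ 1) {s : S} {u : ℝ} (hu : 1 < u) :
    qtl η (s, u) = 0 := by
  have : {x | ENNReal.ofReal u ≤ η s (Set.Iic x)} = ∅ := by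
    refine eq_empty_of_forall_notMem fun x hx => ?_
    have h1 : (1 : ℝ≥0∞) < ENNReal.ofReal u := ENNReal.one_lt_ofReal.mpr hu
    exact absurd (hx.trans (hle s x)) h1.not_ge
  rw [qtl, this, Real.sInf_empty]

lemma measurable_qtl (hm : ∀ x, Measurable fun s => η s (Iic x))
    (h1 : ∀ s, η s (Iic 1) = 1) (h0 : ∀ s x, x ≤ -1 → η s (Iic x) = 0)
    (hle : ∀ s x, η s (Iic x) ≤ 1) : Measurable (qtl η) := by
  have htop : ∀ s x, η s (Iic x) ≠ ∞ := fun s x => ((hle s x).trans_lt ENNReal.one_lt_top).ne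
  refine measurable_of_Iic fun x => ?_
  have hset : qtl η ⁻¹' Iic x =
      {p : S × ℝ | p.2 ∈ Ioc (0 : ℝ) 1 ∧ ENNReal.ofReal p.2 ≤ η p.1 (Iic x)} ∪
      {p : S × ℝ | p.2 ∉ Ioc (0 : ℝ) 1 ∧ 0 ≤ x} := by
    ext ⟨s, u⟩
    simp only [mem_preimage, mem_Iic, mem_union, mem_setOf_eq]
    by_cases hu : u ∈ Ioc (0 : ℝ) 1
    · simp [hu, qtl_le_iff h1 h0 htop hu x]
    · have hq0 : qtl η (s, u) = 0 := by
        rcases not_and_or.mp hu with h | h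
        · push_neg at h
          exact qtl_of_nonpos h
        · push_neg at h
          exact qtl_of_one_lt hle h
      simp [hu, hq0]
  rw [hset]
  refine MeasurableSet.union ?_ ?_
  · have hA : MeasurableSet {p : S × ℝ | ENNReal.ofReal p.2 ≤ η p.1 (Iic x)} :=
      measurableSet_le (ENNReal.measurable_ofReal.comp measurable_snd)
        ((hm x).comp measurable_fst)
    have hB : MeasurableSet {p : S × ℝ | p.2 ∈ Ioc (0 : ℝ) 1} :=
      measurable_snd measurableSet_Ioc
    exact hB.inter hA
  · by_cases hx : (0 : ℝ) ≤ x
    · simp only [hx, and_true]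
      exact (measurable_snd measurableSet_Ioc).compl
    · simp only [hx, and_false, setOf_false]
      exact MeasurableSet.empty

lemma map_qtl (hm : ∀ x, Measurable fun s => η s (Iic x))
    (h1 : ∀ s, η s (Iic 1) = 1) (h0 : ∀ s x, x ≤ -1 → η s (Iic x) = 0)
    (hle : ∀ s x, η s (Iic x) ≤ 1) (huniv : ∀ s, η s univ = 1) (s : S) :
    (volume.restrict (Icc (0 : ℝ) 1)).map (fun u => qtl η (s, u)) = η s := by
  have htop : ∀ s x, η s (Iic x) ≠ ∞ := fun s x => ((hle s x).trans_lt ENNReal.one_lt_top).ne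
  have hq : Measurable (qtl η) := measurable_qtl hm h1 h0 hle
  have hqs : Measurable fun u => qtl η (s, u) := hq.comp measurable_prodMk_left
  have hfin : IsFiniteMeasure (η s) :=
    ⟨by rw [huniv s]; exact ENNReal.one_lt_top⟩
  have hfin2 : IsFiniteMeasure ((volume.restrict (Icc (0 : ℝ) 1)).map
      (fun u => qtl η (s, u))) := by
    constructor
    rw [Measure.map_apply hqs MeasurableSet.univ]
    simp only [preimage_univ, Measure.restrict_apply MeasurableSet.univ, univ_inter,
      Real.volume_Icc]
    norm_num
  refine Measure.ext_of_Iic _ _ fun x => ?_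
  rw [Measure.map_apply hqs measurableSet_Iic,
    show volume.restrict (Icc (0 : ℝ) 1) = volume.restrict (Ioc 0 1) from
      (Measure.restrict_congr_set Ioc_ae_eq_Icc).symm,
    Measure.restrict_apply (hqs measurableSet_Iic)]
  set t := (η s (Iic x)).toReal with ht
  have hnetop : η s (Iic x) ≠ ∞ := htop s x
  have ht0 : 0 ≤ t := ENNReal.toReal_nonneg
  have ht1 : t ≤ 1 := by
    rw [ht, ← ENNReal.toReal_one]
    exact ENNReal.toReal_mono ENNReal.one_ne_top (hle s x)
  have hseteq : (fun u => qtl η (s, u)) ⁻¹' Iic x ∩ Ioc 0 1 = Ioc 0 t := by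
    ext u
    simp only [mem_inter_iff, mem_preimage, mem_Iic, mem_Ioc]
    constructor
    · rintro ⟨hqx, hu0, hu1⟩
      refine ⟨hu0, ?_⟩
      rw [qtl_le_iff h1 h0 htop ⟨hu0, hu1⟩ x] at hqx
      exact (ENNReal.ofReal_le_iff_le_toReal hnetop).mp hqx
    · rintro ⟨hu0, hut⟩
      have hu1 : u ≤ 1 := hut.trans ht1
      refine ⟨?_, hu0, hu1⟩
      rw [qtl_le_iff h1 h0 htop ⟨hu0, hu1⟩ x]
      calc ENNReal.ofReal u ≤ ENNReal.ofReal t := ENNReal.ofReal_le_ofReal hut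
        _ = η s (Iic x) := ENNReal.ofReal_toReal hnetop
  rw [hseteq, Real.volume_Ioc, sub_zero, ht, ENNReal.ofReal_toReal hnetop]

end quantile

/-- **Noise-outsourcing / transfer lemma (Kurtz, Lemma 1.3)**: given random variables `X : Ω → S`
and `Y : Ω → T` into Polish spaces, there is a Borel measurable `G : S × [0,1] → T` such that for
any random variables `X'`, `U` (possibly on another probability space) with `U` uniform on `[0,1]`,
`U` independent of `X'`, and `X'` having the same law as `X`, the pair `(X', G(X',U))` has the same
joint law as `(X, Y)`. -/
theorem stmt14 {Ω : Type*} [MeasurableSpace Ω] (P : Measure Ω) [IsProbabilityMeasure P]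
    {S T : Type*} [MeasurableSpace S] [TopologicalSpace S] [PolishSpace S] [BorelSpace S]
    [MeasurableSpace T] [TopologicalSpace T] [PolishSpace T] [BorelSpace T] [Nonempty T]
    (X : Ω → S) (Y : Ω → T) (hX : Measurable X) (hY : Measurable Y) :
    ∃ G : S × ℝ → T, Measurable G ∧
      ∀ (Ω' : Type) (_ : MeasurableSpace Ω') (P' : Measure Ω'), IsProbabilityMeasure P' →
        ∀ (X' : Ω' → S) (U : Ω' → ℝ), Measurable X' → Measurable U →
          P'.map X' = P.map X →
          P'.map U = volume.restrict (Set.Icc (0 : ℝ) 1) →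
          IndepFun X' U P' →
          P'.map (fun ω => (X' ω, G (X' ω, U ω))) = P.map (fun ω => (X ω, Y ω)) := by
  -- embedding of `T` into `Ioo (-1) 1 ⊆ ℝ`
  obtain ⟨e₁, he₁⟩ := MeasureTheory.exists_measurableEmbedding_real T
  set e₂ : ℝ → ℝ := fun y => ((orderIsoIooNegOneOne ℝ) y : ℝ) with he₂def
  have he₂mono : Monotone e₂ := fun a b h => (orderIsoIooNegOneOne ℝ).monotone h
  have he₂inj : Function.Injective e₂ := fun a b h =>
    (orderIsoIooNegOneOne ℝ).injective (Subtype.ext h)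
  have he₂ : MeasurableEmbedding e₂ := he₂mono.measurable.measurableEmbedding he₂inj
  set eT : T → ℝ := e₂ ∘ e₁ with heTdef
  have heT : MeasurableEmbedding eT := he₂.comp he₁
  have hrange : ∀ t, eT t ∈ Ioo (-1 : ℝ) 1 := fun t => ((orderIsoIooNegOneOne ℝ) (e₁ t)).2
  obtain ⟨f', hf'meas, hf'⟩ :=
    heT.exists_measurable_extend measurable_id (fun x => ⟨Classical.arbitrary T⟩)
  -- disintegration
  set ρ : Measure (S × T) := P.map (fun ω => (X ω, Y ω)) with hρdef
  have hρprob : IsProbabilityMeasure ρ :=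
    Measure.isProbabilityMeasure_map (hX.prodMk hY).aemeasurable
  set κ := ρ.condKernel with hκdef
  set η : S → Measure ℝ := fun s => (κ s).map eT with hηdef
  have hηapp : ∀ s (A : Set ℝ), MeasurableSet A → η s A = κ s (eT ⁻¹' A) := fun s A hA =>
    Measure.map_apply heT.measurable hA
  have hm : ∀ x, Measurable fun s => η s (Iic x) := by
    intro x
    simp only [hηdef]
    simp only [fun s => hηapp s (Iic x) measurableSet_Iic, Measure.map_apply heT.measurable measurableSet_Iic]
    exact Kernel.measurable_coe κ (heT.measurable measurableSet_Iic)
  have h1 : ∀ s, η s (Iic 1) = 1 := by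
    intro s
    rw [hηapp s _ measurableSet_Iic]
    have : eT ⁻¹' Iic 1 = univ := eq_univ_of_forall fun t => (hrange t).2.le
    rw [this]
    exact measure_univ
  have h0 : ∀ s x, x ≤ -1 → η s (Iic x) = 0 := by
    intro s x hx
    rw [hηapp s _ measurableSet_Iic]
    have : eT ⁻¹' Iic x = ∅ :=
      eq_empty_of_forall_notMem fun t ht => absurd (le_trans (mem_Iic.mp ht) hx)
        (hrange t).1.not_ge
    rw [this]
    exact measure_empty
  have huniv : ∀ s, η s univ = 1 := by
    intro s
    rw [hηapp s _ MeasurableSet.univ, preimage_univ]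
    exact measure_univ
  have hle : ∀ s x, η s (Iic x) ≤ 1 := fun s x =>
    (measure_mono (subset_univ _)).trans (huniv s).le
  have hq : Measurable (qtl η) := measurable_qtl hm h1 h0 hle
  -- the function G
  refine ⟨fun p => f' (qtl η p), hf'meas.comp hq, ?_⟩
  intro Ω' mΩ' P' hP' X' U hX' hU hmapX hmapU hindep
  set unif : Measure ℝ := volume.restrict (Icc (0 : ℝ) 1) with hunif
  set G : S × ℝ → T := fun p => f' (qtl η p) with hGdef
  have hGmeas : Measurable G := hf'meas.comp hq
  -- kernel identity
  have hκs : ∀ s, unif.map (fun u => G (s, u)) = κ s := by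
    intro s
    have hqs : Measurable fun u => qtl η (s, u) := hq.comp measurable_prodMk_left
    have : (fun u => G (s, u)) = f' ∘ (fun u => qtl η (s, u)) := rfl
    rw [this, ← Measure.map_map hf'meas hqs, map_qtl hm h1 h0 hle huniv s,
      show η s = (κ s).map eT from rfl, Measure.map_map hf'meas heT.measurable, hf',
      Measure.map_id]
  -- joint law of (X', U)
  set μ : Measure S := P.map X with hμdef
  have hμprob : IsProbabilityMeasure μ := Measure.isProbabilityMeasure_map hX.aemeasurable
  have hunifprob : IsProbabilityMeasure unif := ⟨by
    rw [hunif, Measure.restrict_apply MeasurableSet.univ, univ_inter, Real.volume_Icc]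
    norm_num⟩
  have hXU : P'.map (fun ω => (X' ω, U ω)) = μ.prod unif := by
    rw [← hmapX, ← hmapU] at *
    exact (indepFun_iff_map_prod_eq_prod_map_map hX'.aemeasurable hU.aemeasurable).mp hindep
  have hΦ : Measurable fun p : S × ℝ => (p.1, G p) := measurable_fst.prodMk hGmeas
  have hcomp : (fun ω => (X' ω, G (X' ω, U ω)))
      = (fun p : S × ℝ => (p.1, G p)) ∘ (fun ω => (X' ω, U ω)) := rfl
  rw [hcomp, ← Measure.map_map hΦ (hX'.prodMk hU), hXU]
  -- identify with the compProd
  have hfst : ρ.fst = μ := by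
    rw [Measure.fst, hρdef, hμdef, Measure.map_map measurable_fst (hX.prodMk hY)]
    rfl
  have hdis : μ ⊗ₘ κ = ρ := by
    rw [← hfst, hκdef]
    exact ρ.disintegrate ρ.condKernel
  rw [← hdis]
  ext E hE
  rw [Measure.map_apply hΦ hE, Measure.prod_apply (hΦ hE), Measure.compProd_apply hE, ← hfst, hfst]
  refine lintegral_congr fun s => ?_
  have hpre : Prod.mk s ⁻¹' ((fun p : S × ℝ => (p.1, G p)) ⁻¹' E)
      = (fun u => G (s, u)) ⁻¹' (Prod.mk s ⁻¹' E) := rfl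
  rw [hpre]
  have hmapG : unif ((fun u => G (s, u)) ⁻¹' (Prod.mk s ⁻¹' E))
      = (unif.map (fun u => G (s, u))) (Prod.mk s ⁻¹' E) :=
    (Measure.map_apply (hGmeas.comp measurable_prodMk_left)
      (measurable_prodMk_left hE)).symm
  rw [hmapG, hκs s]
end
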